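/- arXiv:2309.01830 — 3 statements merged into one kernel-verified Lean document; each statement's English description precedes it below -/
import Mathlib

section
/- Let (M, φ, g) be a para-Kähler-Norden manifold and Γ = (γ(t), ξ(t)) a curve on T₁^φM. Then: (1) Φ = (γ(t), φξ(t)) is also a curve on T₁^φM; (2) Φ is a geodesic of T₁^φM with the φ-Sasaki metric if and only if Γ is. -/
/-! The map `(x, ξ) ↦ (x, φξ)` preserves the twin form `g(ξ, φξ)` because `φ` is a `g`-symmetric
involution, and it preserves the geodesic equations because `φ` is parallel (it commutes with
covariant differentiation), the curvature is pure (so `R(φξ', φφξ) = R(ξ', φξ)`), and `φ` is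
injective (so the second equation for `φξ` is `φ` applied to the one for `ξ`). -/

section ParaKaehlerNorden

variable {V : Type*} [AddCommGroup V] [Module ℝ V]

/-- The geodesic equations of `T₁^φM` with the φ-Sasaki metric for a curve `(γ, ξ)`: here `γ'` is
the velocity of `γ` and `D` the covariant derivative along `γ`. -/
def IsPhiSasakiGeodesic (g : V →ₗ[ℝ] V →ₗ[ℝ] ℝ) (φ : V →ₗ[ℝ] V) (R : V → V → V → V)
    (D : (ℝ → V) → (ℝ → V)) (γ' ξ : ℝ → V) : Prop :=
  ∀ t, D γ' t = R (D ξ t) (φ (ξ t)) (γ' t) ∧ D (D ξ) t = -(g (D ξ t) (φ (D ξ t))) • ξ t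

theorem twinForm_apply_phi {g : V →ₗ[ℝ] V →ₗ[ℝ] ℝ} {φ : V →ₗ[ℝ] V} (hφ2 : ∀ X, φ (φ X) = X)
    (hpure : ∀ X Y, g (φ X) Y = g X (φ Y)) (X : V) : g (φ X) (φ (φ X)) = g X (φ X) := by
  rw [hφ2, hpure]

theorem curvature_phi_phi {φ : V →ₗ[ℝ] V} {R : V → V → V → V} (hφ2 : ∀ X, φ (φ X) = X)
    (hRpure : ∀ X Y Z, R (φ X) Y Z = R X (φ Y) Z) (X Y Z : V) :
    R (φ X) (φ (φ Y)) Z = R X (φ Y) Z := by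
  rw [hRpure, hφ2]

theorem LinearMap.map_eq_smul_map_iff {φ : V →ₗ[ℝ] V} (hφ : Function.Injective φ) (a b : V)
    (c : ℝ) : φ a = c • φ b ↔ a = c • b := by
  rw [← map_smul, hφ.eq_iff]

theorem isPhiSasakiGeodesic_phi_iff {g : V →ₗ[ℝ] V →ₗ[ℝ] ℝ} {φ : V →ₗ[ℝ] V}
    {R : V → V → V → V} {D : (ℝ → V) → (ℝ → V)} (hφ2 : ∀ X, φ (φ X) = X)
    (hpure : ∀ X Y, g (φ X) Y = g X (φ Y)) (hRpure : ∀ X Y Z, R (φ X) Y Z = R X (φ Y) Z)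
    (hDφ : ∀ X : ℝ → V, D (fun s => φ (X s)) = fun s => φ (D X s)) (γ' ξ : ℝ → V) :
    IsPhiSasakiGeodesic g φ R D γ' (fun s => φ (ξ s)) ↔ IsPhiSasakiGeodesic g φ R D γ' ξ := by
  have hφinj : Function.Injective φ := Function.LeftInverse.injective hφ2
  have hDDφ : D (D fun s => φ (ξ s)) = fun s => φ (D (D ξ) s) := by rw [hDφ, hDφ]
  refine forall_congr' fun t => and_congr ?_ ?_
  · rw [hDφ, curvature_phi_phi hφ2 hRpure]
  · rw [hDDφ, hDφ, twinForm_apply_phi hφ2 hpure, LinearMap.map_eq_smul_map_iff hφinj]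

end ParaKaehlerNorden

theorem phi_image_curve_geodesic_iff_general
    {V : Type*} [AddCommGroup V] [Module ℝ V]
    (g : V →ₗ[ℝ] V →ₗ[ℝ] ℝ)
    (φ : V →ₗ[ℝ] V) (hφ2 : ∀ X, φ (φ X) = X)
    (hpure : ∀ X Y, g (φ X) Y = g X (φ Y))
    (R : V → V → V → V)
    (hRpure : ∀ X Y Z, R (φ X) Y Z = R X (φ Y) Z)   -- purity of curvature
    (D : (ℝ → V) → (ℝ → V))
    (hDφ : ∀ X : ℝ → V, D (fun s => φ (X s)) = fun s => φ (D X s))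
    (γ' ξ : ℝ → V)
    (hunit : ∀ t, g (ξ t) (φ (ξ t)) = 1) :
    (∀ t, g (φ (ξ t)) (φ (φ (ξ t))) = 1) ∧
    ((∀ t, D γ' t = R (D (fun s => φ (ξ s)) t) (φ (φ (ξ t))) (γ' t) ∧
          D (D (fun s => φ (ξ s))) t =
            -(g (D (fun s => φ (ξ s)) t) (φ (D (fun s => φ (ξ s)) t)))
              • φ (ξ t)) ↔
     (∀ t, D γ' t = R (D ξ t) (φ (ξ t)) (γ' t) ∧
          D (D ξ) t = -(g (D ξ t) (φ (D ξ t))) • ξ t)) :=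
  ⟨fun t => (twinForm_apply_phi hφ2 hpure (ξ t)).trans (hunit t),
    isPhiSasakiGeodesic_phi_iff hφ2 hpure hRpure hDφ γ' ξ⟩

/-- If Γ = (γ, ξ) is a curve on T₁^φM of a para-Kähler-Norden
manifold, then (1) Φ = (γ, φξ) is also a curve on T₁^φM, and (2) Φ is a
geodesic of (T₁^φM, φ-Sasaki metric) if and only if Γ is; geodesics being
characterized by γ'' = R(ξ', φξ)γ' and ξ'' = −g(ξ', φξ')ξ. -/
theorem phi_image_curve_geodesic_iff
    {V : Type*} [AddCommGroup V] [Module ℝ V]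
    (g : V →ₗ[ℝ] V →ₗ[ℝ] ℝ) (hgsym : ∀ X Y, g X Y = g Y X)
    (φ : V →ₗ[ℝ] V) (hφ2 : ∀ X, φ (φ X) = X)
    (hpure : ∀ X Y, g (φ X) Y = g X (φ Y))
    (R : V → V → V → V)
    (hRpure : ∀ X Y Z, R (φ X) Y Z = R X (φ Y) Z)   -- purity of curvature
    (D : (ℝ → V) → (ℝ → V))
    (hDφ : ∀ X : ℝ → V, D (fun s => φ (X s)) = fun s => φ (D X s))
    (γ' ξ : ℝ → V)
    (hunit : ∀ t, g (ξ t) (φ (ξ t)) = 1) :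
    (∀ t, g (φ (ξ t)) (φ (φ (ξ t))) = 1) ∧
    ((∀ t, D γ' t = R (D (fun s => φ (ξ s)) t) (φ (φ (ξ t))) (γ' t) ∧
          D (D (fun s => φ (ξ s))) t =
            -(g (D (fun s => φ (ξ s)) t) (φ (D (fun s => φ (ξ s)) t)))
              • φ (ξ t)) ↔
     (∀ t, D γ' t = R (D ξ t) (φ (ξ t)) (γ' t) ∧
          D (D ξ) t = -(g (D ξ t) (φ (D ξ t))) • ξ t)) :=
  phi_image_curve_geodesic_iff_general g φ hφ2 hpure R hRpure D hDφ γ' ξ hunit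
end

section
/- On the para-Kähler-Norden Euclidean space (ℝ^{2m}, φ, ⟨,⟩) every oblique geodesic Γ = (γ(t), ξ(t)) of T₁^φℝ^{2m} with the φ-Sasaki metric has the form γ(t) = c₁t + c₂, ξ(t) = c₃cos(ρt) + c₄sin(ρt), where ρ is a constant with 0 < ρ < 1 and c₁, c₂, c₃, c₄ are constant vectors. -/
open scoped RealInnerProductSpace

/-- On para-Kähler-Norden Euclidean space (ℝ^{2m}, φ, ⟨,⟩), every
oblique geodesic Γ = (γ, ξ) of T₁^φℝ^{2m} with the φ-Sasaki metric (i.e. with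
0 < ρ < 1, where since R = 0 the geodesic equations reduce to γ'' = 0 and
ξ'' = −ρ²ξ) has the form γ(t) = t c₁ + c₂, ξ(t) = cos(ρt) c₃ + sin(ρt) c₄. -/
theorem oblique_geodesic_euclidean_form
    {m : ℕ}
    (φ : EuclideanSpace ℝ (Fin (2 * m)) →ₗ[ℝ] EuclideanSpace ℝ (Fin (2 * m)))
    (hφ2 : ∀ X, φ (φ X) = X)
    (hcompat : ∀ X Y, ⟪φ X, Y⟫ = ⟪X, φ Y⟫)
    (γ ξ : ℝ → EuclideanSpace ℝ (Fin (2 * m)))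
    (hγ : ContDiff ℝ 2 γ) (hξ : ContDiff ℝ 2 ξ)
    (ρ : ℝ) (hρ0 : 0 < ρ) (hρ1 : ρ < 1)
    (hunit : ∀ t, ⟪ξ t, φ (ξ t)⟫ = 1)
    (hρdef : ∀ t, ⟪deriv ξ t, φ (deriv ξ t)⟫ = ρ ^ 2)
    (hgeo1 : ∀ t, deriv (deriv γ) t = 0)
    (hgeo2 : ∀ t, deriv (deriv ξ) t = -(ρ ^ 2) • ξ t) :
    ∃ c₁ c₂ c₃ c₄ : EuclideanSpace ℝ (Fin (2 * m)), ∀ t,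
      γ t = t • c₁ + c₂ ∧
      ξ t = Real.cos (ρ * t) • c₃ + Real.sin (ρ * t) • c₄ := by
  have hγd : Differentiable ℝ γ := hγ.differentiable (by norm_num)
  have hξd : Differentiable ℝ ξ := hξ.differentiable (by norm_num)
  have hγ' : Differentiable ℝ (deriv γ) := by
    have h := (contDiff_succ_iff_deriv.mp (show ContDiff ℝ (1+1) γ from by exact_mod_cast hγ)).2
    exact h.2.differentiable one_ne_zero
  have hξ' : Differentiable ℝ (deriv ξ) := by
    have h := (contDiff_succ_iff_deriv.mp (show ContDiff ℝ (1+1) ξ from by exact_mod_cast hξ)).2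
    exact h.2.differentiable one_ne_zero
  -- γ part
  have hc1 : ∀ t, deriv γ t = deriv γ 0 :=
    fun t => is_const_of_deriv_eq_zero hγ' hgeo1 t 0
  have hγform : ∀ t, γ t = t • deriv γ 0 + γ 0 := by
    have hder : ∀ t, HasDerivAt (fun t => γ t - t • deriv γ 0) 0 t := by
      intro t
      have h1 : HasDerivAt γ (deriv γ t) t := (hγd t).hasDerivAt
      have h2 : HasDerivAt (fun s : ℝ => s • deriv γ 0) ((1:ℝ) • deriv γ 0) t :=
        (hasDerivAt_id t).smul_const (deriv γ 0)
      have := h1.sub h2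
      rw [hc1 t, one_smul, sub_self] at this
      exact this
    have hconst : ∀ t, (fun t => γ t - t • deriv γ 0) t = (fun t => γ t - t • deriv γ 0) 0 :=
      fun t => is_const_of_deriv_eq_zero (fun s => (hder s).differentiableAt)
        (fun s => (hder s).deriv) t 0
    intro t
    have := hconst t
    simp only [zero_smul, sub_zero] at this
    have : γ t - t • deriv γ 0 = γ 0 := this
    linear_combination (norm := module) this
  -- ξ part
  set a : ℝ → EuclideanSpace ℝ (Fin (2 * m)) :=
    fun t => Real.cos (ρ*t) • ξ t - (ρ⁻¹ * Real.sin (ρ*t)) • deriv ξ t with ha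
  set b : ℝ → EuclideanSpace ℝ (Fin (2 * m)) :=
    fun t => Real.sin (ρ*t) • ξ t + (ρ⁻¹ * Real.cos (ρ*t)) • deriv ξ t with hb
  have hcos : ∀ t : ℝ, HasDerivAt (fun s => Real.cos (ρ*s)) (-Real.sin (ρ*t) * ρ) t :=
    fun t => by simpa using ((hasDerivAt_id t).const_mul ρ).cos
  have hsin : ∀ t : ℝ, HasDerivAt (fun s => Real.sin (ρ*s)) (Real.cos (ρ*t) * ρ) t :=
    fun t => by simpa using ((hasDerivAt_id t).const_mul ρ).sin
  have hξ'' : ∀ t, HasDerivAt (deriv ξ) (-(ρ ^ 2) • ξ t) t := by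
    intro t
    have := (hξ' t).hasDerivAt
    rwa [hgeo2 t] at this
  have hξ1 : ∀ t, HasDerivAt ξ (deriv ξ t) t := fun t => (hξd t).hasDerivAt
  have hada : ∀ t, HasDerivAt a 0 t := by
    intro t
    have h1 := (hcos t).smul (hξ1 t)
    have h2 := (((hsin t).const_mul ρ⁻¹)).smul (hξ'' t)
    have h := h1.sub h2
    refine h.congr_deriv ?_
    simp only [smul_smul]
    match_scalars <;> field_simp <;> ring
  have hbdb : ∀ t, HasDerivAt b 0 t := by
    intro t
    have h1 := (hsin t).smul (hξ1 t)
    have h2 := (((hcos t).const_mul ρ⁻¹)).smul (hξ'' t)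
    have h := h1.add h2
    refine h.congr_deriv ?_
    simp only [smul_smul]
    match_scalars <;> field_simp <;> ring
  have haconst : ∀ t, a t = a 0 := fun t =>
    is_const_of_deriv_eq_zero (fun s => (hada s).differentiableAt)
      (fun s => (hada s).deriv) t 0
  have hbconst : ∀ t, b t = b 0 := fun t =>
    is_const_of_deriv_eq_zero (fun s => (hbdb s).differentiableAt)
      (fun s => (hbdb s).deriv) t 0
  refine ⟨deriv γ 0, γ 0, a 0, b 0, fun t => ⟨hγform t, ?_⟩⟩
  rw [← haconst t, ← hbconst t, ha, hb]
  simp only [smul_add, smul_sub, smul_smul]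
  match_scalars <;> field_simp <;> nlinarith [Real.sin_sq_add_cos_sq (ρ*t)]
end

section
/- On (ℝ², φ, g) with g = e^{2x}dx² + e^{2y}dy² and φ interchanging the coordinate directions with factors e^{y−x}, e^{x−y}, the geodesics of g with γ(0) = (a,b) and γ'(0) = (λ, η), λ, η > 0, are γ(t) = (a + ln(1 + λt), b + ln(1 + ηt)); moreover g(γ'_t, φγ'_t) = 2λη e^{a+b}, so for λη = 1/(2e^{a+b}) the natural lift (γ, γ'_t) lies in T₁^φℝ². -/
open Set Real

lemma key (a lam : ℝ) (hlam : 0 < lam) (x : ℝ → ℝ) (hx : ContDiff ℝ 2 x)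
    (hx0 : x 0 = a) (hx'0 : deriv x 0 = lam)
    (hode : ∀ t, 0 < 1 + lam * t → deriv (deriv x) t + (deriv x t) ^ 2 = 0) :
    ∀ t, 0 < 1 + lam * t →
      x t = a + Real.log (1 + lam * t) ∧ deriv x t = lam / (1 + lam * t) := by
  have hdx : Differentiable ℝ x := hx.differentiable two_ne_zero
  have hcd : ContDiff ℝ 1 (deriv x) := by
    have := (contDiff_succ_iff_deriv (n := 1)).mp (by norm_num at hx ⊢; exact hx)
    exact this.2.2
  have hdx' : Differentiable ℝ (deriv x) := hcd.differentiable one_ne_zero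
  set s : Set ℝ := {t | 0 < 1 + lam * t} with hs
  have hsopen : IsOpen s := isOpen_lt continuous_const (by continuity)
  have hsconv : Convex ℝ s := by
    intro p hp q hq u v hu hv huv
    simp only [hs, mem_setOf_eq, smul_eq_mul] at *
    rcases eq_or_lt_of_le hu with h | h
    · have hv1 : v = 1 := by linarith
      simpa [← h, hv1] using hq
    · nlinarith [mul_pos h hp, mul_nonneg hv hq.le]
  have h0s : (0 : ℝ) ∈ s := by simp [hs]
  -- F t = exp (x t) * deriv x t
  set F : ℝ → ℝ := fun t => Real.exp (x t) * deriv x t with hF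
  have hFd : ∀ t, HasDerivAt F
      (Real.exp (x t) * ((deriv x t) ^ 2 + deriv (deriv x) t)) t := by
    intro t
    have h1 : HasDerivAt (fun t => Real.exp (x t)) (Real.exp (x t) * deriv x t) t :=
      (Real.hasDerivAt_exp (x t)).comp t (hdx t).hasDerivAt
    have h2 : HasDerivAt (deriv x) (deriv (deriv x) t) t := (hdx' t).hasDerivAt
    have : HasDerivAt (fun t => Real.exp (x t) * deriv x t) _ t := h1.mul h2
    convert this using 1
    ring
  have hF0 : ∀ t ∈ s, HasDerivAt F 0 t := by
    intro t ht
    have := hode t ht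
    have h := hFd t
    rw [show (deriv x t) ^ 2 + deriv (deriv x) t = 0 by linarith, mul_zero] at h
    exact h
  have hFconst : ∀ t ∈ s, F t = Real.exp a * lam := by
    intro t ht
    have := hsconv.is_const_of_fderivWithin_eq_zero (f := F)
      (fun z hz => ((hF0 z hz).differentiableAt.differentiableWithinAt))
      (fun z hz => by
        rw [fderivWithin_eq_fderiv (hsopen.uniqueDiffOn z hz) (hF0 z hz).differentiableAt]
        rw [(hF0 z hz).hasFDerivAt.fderiv]; ext w; simp)
      ht h0s
    simpa [hF, hx0, hx'0] using this
  -- G t = exp (x t) - exp a * (1 + lam * t)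
  set G : ℝ → ℝ := fun t => Real.exp (x t) - Real.exp a * (1 + lam * t) with hG
  have hG0 : ∀ t ∈ s, HasDerivAt G 0 t := by
    intro t ht
    have h1 : HasDerivAt (fun t => Real.exp (x t)) (Real.exp (x t) * deriv x t) t :=
      (Real.hasDerivAt_exp (x t)).comp t (hdx t).hasDerivAt
    have h2 : HasDerivAt (fun t : ℝ => Real.exp a * (1 + lam * t)) (Real.exp a * lam) t := by
      have : HasDerivAt (fun t : ℝ => 1 + lam * t) lam t := by
        simpa using ((hasDerivAt_id t).const_mul lam).const_add 1
      simpa using this.const_mul (Real.exp a)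
    have : HasDerivAt (fun t => Real.exp (x t) - Real.exp a * (1 + lam * t)) _ t := h1.sub h2
    rw [show Real.exp (x t) * deriv x t = Real.exp a * lam from hFconst t ht] at this
    simpa using this
  have hGconst : ∀ t ∈ s, G t = 0 := by
    intro t ht
    have := hsconv.is_const_of_fderivWithin_eq_zero (f := G)
      (fun z hz => ((hG0 z hz).differentiableAt.differentiableWithinAt))
      (fun z hz => by
        rw [fderivWithin_eq_fderiv (hsopen.uniqueDiffOn z hz) (hG0 z hz).differentiableAt]
        rw [(hG0 z hz).hasFDerivAt.fderiv]; ext w; simp)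
      ht h0s
    simpa [hG, hx0] using this
  intro t ht
  have hts : t ∈ s := ht
  have hexp : Real.exp (x t) = Real.exp a * (1 + lam * t) := by
    have := hGconst t hts
    simp only [hG] at this
    linarith
  constructor
  · have : x t = Real.log (Real.exp a * (1 + lam * t)) := by
      rw [← hexp, Real.log_exp]
    rw [this, Real.log_mul (Real.exp_ne_zero a) (ne_of_gt ht), Real.log_exp]
  · have hFt := hFconst t hts
    simp only [hF] at hFt
    rw [hexp] at hFt
    have hpos : Real.exp a * (1 + lam * t) ≠ 0 :=
      ne_of_gt (mul_pos (Real.exp_pos a) ht)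
    field_simp at hFt ⊢
    nlinarith [Real.exp_pos a]

/-- On (ℝ², φ, g) with g = e^{2x}dx² + e^{2y}dy² (nonzero
Christoffel symbols Γ¹₁₁ = Γ²₂₂ = 1, so the geodesic equations are
x'' + (x')² = 0, y'' + (y')² = 0) and φ(∂x) = e^{x−y}∂y, φ(∂y) = e^{y−x}∂x,
the geodesic γ = (x, y) with γ(0) = (a,b), γ'(0) = (λ, η), λ, η > 0, is
γ(t) = (a + ln(1 + λt), b + ln(1 + ηt)) on the domain where 1 + λt, 1 + ηt > 0.
Moreover g(γ'_t, φγ'_t) = 2 x' y' e^{x+y} = 2λη e^{a+b} is constant, so if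
λη = 1/(2e^{a+b}) then g(γ'_t, φγ'_t) = 1, i.e. the natural lift (γ, γ'_t)
lies in T₁^φℝ². -/
theorem geodesics_example_R2
    (a b lam eta : ℝ) (hlam : 0 < lam) (heta : 0 < eta)
    (x y : ℝ → ℝ) (hx : ContDiff ℝ 2 x) (hy : ContDiff ℝ 2 y)
    (hx0 : x 0 = a) (hy0 : y 0 = b)
    (hx'0 : deriv x 0 = lam) (hy'0 : deriv y 0 = eta)
    (hodex : ∀ t, 0 < 1 + lam * t → deriv (deriv x) t + (deriv x t) ^ 2 = 0)
    (hodey : ∀ t, 0 < 1 + eta * t → deriv (deriv y) t + (deriv y t) ^ 2 = 0) :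
    (∀ t, 0 < 1 + lam * t → x t = a + Real.log (1 + lam * t)) ∧
    (∀ t, 0 < 1 + eta * t → y t = b + Real.log (1 + eta * t)) ∧
    (∀ t, 0 < 1 + lam * t → 0 < 1 + eta * t →
      2 * deriv x t * deriv y t * Real.exp (x t + y t)
        = 2 * lam * eta * Real.exp (a + b)) ∧
    (lam * eta = 1 / (2 * Real.exp (a + b)) →
      ∀ t, 0 < 1 + lam * t → 0 < 1 + eta * t →
        2 * deriv x t * deriv y t * Real.exp (x t + y t) = 1) := by
  have Kx := key a lam hlam x hx hx0 hx'0 hodex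
  have Ky := key b eta heta y hy hy0 hy'0 hodey
  have prod : ∀ t, 0 < 1 + lam * t → 0 < 1 + eta * t →
      2 * deriv x t * deriv y t * Real.exp (x t + y t)
        = 2 * lam * eta * Real.exp (a + b) := by
    intro t ht1 ht2
    obtain ⟨hxe, hxd⟩ := Kx t ht1
    obtain ⟨hye, hyd⟩ := Ky t ht2
    rw [hxd, hyd, hxe, hye]
    rw [show a + Real.log (1 + lam * t) + (b + Real.log (1 + eta * t))
        = (a + b) + (Real.log (1 + lam * t) + Real.log (1 + eta * t)) by ring,
      Real.exp_add]
    simp only [Real.exp_add, Real.exp_log ht1, Real.exp_log ht2]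
    field_simp [ht1.ne', ht2.ne']
    exact div_self (by rw [mul_comm]; exact ht2.ne')
  refine ⟨fun t ht => (Kx t ht).1, fun t ht => (Ky t ht).1, prod, ?_⟩
  intro hle t ht1 ht2
  rw [prod t ht1 ht2, show (2:ℝ) * lam * eta = 2 * (lam * eta) by ring, hle]
  have := Real.exp_pos (a + b)
  field_simp
end
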